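/- Correctness of kmp-parsing (Theorem 1): Let C be a vertex subset of a graph N and k, p positive integers with p < k. Let C' be the set of vertices of C whose core number within the induced subgraph N[C] is at least k, let A be a connected component of N[C'] with positive modularity, and let A_nc be any set of vertices from C \ C' each adjacent to at least p vertices of A. Then in the cluster A' = A ∪ A_nc, when core numbers are recomputed within N[A'], exactly the vertices of A have core number at least k; i.e., no vertex of A_nc attains core number ≥ k in N[A'], and hence A' is kmp-valid with core A and non-core A_nc. -/
import Mathlib


open scoped Classical

/-- Core number of `x` within the subgraph of `G` induced by `S`: the largest
`j` such that `x` lies in a subset of `S` in which every vertex has at least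
`j` neighbors inside the subset. -/
noncomputable def coreNumIn {V : Type*} [Fintype V] [DecidableEq V]
    (G : SimpleGraph V) (S : Finset V) (x : V) : ℕ :=
  sSup {j : ℕ | ∃ T : Finset V, T ⊆ S ∧ x ∈ T ∧
    ∀ u ∈ T, j ≤ (T.filter (fun w => G.Adj u w)).card}

/-- Number of edges of `G` internal to `s`. -/
noncomputable def internalEdges {V : Type*} [Fintype V] [DecidableEq V]
    (G : SimpleGraph V) (s : Finset V) : ℕ :=
  (G.edgeFinset.filter (fun e => ∀ v ∈ e, v ∈ s)).card

/-- Sum of degrees (in `G`) of the vertices of `s`. -/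
noncomputable def degSum {V : Type*} [Fintype V] [DecidableEq V]
    (G : SimpleGraph V) (s : Finset V) : ℕ :=
  ∑ v ∈ s, G.degree v

/-- Modularity of a single cluster `s` in the network `G`. -/
noncomputable def modularity {V : Type*} [Fintype V] [DecidableEq V]
    (G : SimpleGraph V) (s : Finset V) : ℝ :=
  (internalEdges G s : ℝ) / G.edgeFinset.card -
    ((degSum G s : ℝ) / (2 * G.edgeFinset.card)) ^ 2

lemma coreSet_bdd {V : Type*} [Fintype V] [DecidableEq V]
    (G : SimpleGraph V) (S : Finset V) (x : V) :
    BddAbove {j : ℕ | ∃ T : Finset V, T ⊆ S ∧ x ∈ T ∧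
      ∀ u ∈ T, j ≤ (T.filter (fun w => G.Adj u w)).card} := by
  refine ⟨Fintype.card V, ?_⟩
  rintro j ⟨T, hTS, hxT, hT⟩
  exact le_trans (hT x hxT) (le_trans (Finset.card_filter_le _ _) (Finset.card_le_univ T))

lemma coreSet_nonempty {V : Type*} [Fintype V] [DecidableEq V]
    (G : SimpleGraph V) (S : Finset V) (x : V) (hx : x ∈ S) :
    Set.Nonempty {j : ℕ | ∃ T : Finset V, T ⊆ S ∧ x ∈ T ∧
      ∀ u ∈ T, j ≤ (T.filter (fun w => G.Adj u w)).card} :=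
  ⟨0, {x}, Finset.singleton_subset_iff.2 hx, Finset.mem_singleton_self x,
    fun _ _ => Nat.zero_le _⟩

lemma coreNumIn_witness {V : Type*} [Fintype V] [DecidableEq V]
    (G : SimpleGraph V) (S : Finset V) (x : V) (hx : x ∈ S) (k : ℕ)
    (hk : k ≤ coreNumIn G S x) :
    ∃ T : Finset V, T ⊆ S ∧ x ∈ T ∧
      ∀ u ∈ T, k ≤ (T.filter (fun w => G.Adj u w)).card := by
  rw [coreNumIn] at hk
  have hmem := Nat.sSup_mem (coreSet_nonempty G S x hx) (coreSet_bdd G S x)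
  obtain ⟨T, hTS, hxT, hT⟩ := hmem
  exact ⟨T, hTS, hxT, fun u hu => le_trans hk (hT u hu)⟩

lemma le_coreNumIn {V : Type*} [Fintype V] [DecidableEq V]
    (G : SimpleGraph V) (S : Finset V) (x : V) (k : ℕ)
    (T : Finset V) (hTS : T ⊆ S) (hxT : x ∈ T)
    (hT : ∀ u ∈ T, k ≤ (T.filter (fun w => G.Adj u w)).card) :
    k ≤ coreNumIn G S x := by
  rw [coreNumIn]
  exact le_csSup (coreSet_bdd G S x) ⟨T, hTS, hxT, hT⟩

/-- Correctness of `kmp`-parsing (Theorem 1 of the paper). Let `C'` be the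
vertices of `C` of core number at least `k` within `G[C]`, let `A` be a
connected component of `G[C']` with positive modularity, and let `A_nc` be
peripheral vertices from `C \ C'`, each adjacent to at least `p` vertices of
`A` (`0 < p < k`). Then in `A' = A ∪ A_nc` exactly the vertices of `A` have
core number at least `k` within `G[A']`, and `A'` is `kmp`-valid with core `A`
and non-core `A_nc`. -/
theorem kmp_parsing_correct {V : Type*} [Fintype V] [DecidableEq V]
    (G : SimpleGraph V) (C : Finset V) (k p : ℕ) (hp : 0 < p) (hpk : p < k)
    (C' : Finset V) (hC' : C' = C.filter (fun v => k ≤ coreNumIn G C v))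
    (A : Finset V) (hAne : A.Nonempty) (hAsub : A ⊆ C')
    (hAconn : (G.induce (↑A : Set V)).Connected)
    (hAcomp : ∀ u ∈ A, ∀ v ∈ C', G.Adj u v → v ∈ A)
    (hAmod : 0 < modularity G A)
    (Anc : Finset V) (hAnc : Anc ⊆ C \ C')
    (hAncp : ∀ x ∈ Anc, p ≤ (A.filter (fun y => G.Adj x y)).card) :
    (∀ x ∈ A ∪ Anc, (k ≤ coreNumIn G (A ∪ Anc) x ↔ x ∈ A)) ∧
    (∀ v ∈ A, k ≤ ((A.erase v).filter (fun w => G.Adj v w)).card) ∧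
    ((G.induce (↑A : Set V)).Connected ∧ 0 < modularity G A) ∧
    (∀ x ∈ Anc, p ≤ (A.filter (fun y => G.Adj x y)).card) := by
  have hC'C : C' ⊆ C := by rw [hC']; exact Finset.filter_subset _ _
  have hA_C : A ⊆ C := hAsub.trans hC'C
  have hAnc_C : Anc ⊆ C := hAnc.trans (Finset.sdiff_subset)
  have hUnion_C : A ∪ Anc ⊆ C := Finset.union_subset hA_C hAnc_C
  -- every vertex of A has ≥ k neighbors inside A
  have hdeg : ∀ v ∈ A, k ≤ (A.filter (fun w => G.Adj v w)).card := by
    intro v hv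
    have hvC' := hAsub hv
    have hvcore : k ≤ coreNumIn G C v := by
      rw [hC'] at hvC'; exact (Finset.mem_filter.1 hvC').2
    obtain ⟨T, hTC, hvT, hT⟩ := coreNumIn_witness G C v (hA_C hv) k hvcore
    -- T ⊆ C'
    have hTC' : ∀ u ∈ T, u ∈ C' := by
      intro u hu
      rw [hC', Finset.mem_filter]
      exact ⟨hTC hu, le_coreNumIn G C u k T hTC hu hT⟩
    have hsub : T.filter (fun w => G.Adj v w) ⊆ A.filter (fun w => G.Adj v w) := by
      intro w hw
      rw [Finset.mem_filter] at hw ⊢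
      exact ⟨hAcomp v hv w (hTC' w hw.1) hw.2, hw.2⟩
    exact le_trans (hT v hvT) (Finset.card_le_card hsub)
  -- forward: no vertex of Anc reaches core k in A ∪ Anc
  have hforward : ∀ x ∈ A ∪ Anc, k ≤ coreNumIn G (A ∪ Anc) x → x ∈ A := by
    intro x hx hk
    by_contra hxA
    have hxAnc : x ∈ Anc := by
      rcases Finset.mem_union.1 hx with h | h
      · exact absurd h hxA
      · exact h
    obtain ⟨T, hTU, hxT, hT⟩ := coreNumIn_witness G (A ∪ Anc) x hx k hk
    have hxC' : x ∈ C' := by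
      rw [hC', Finset.mem_filter]
      refine ⟨hUnion_C (hTU hxT), ?_⟩
      refine le_coreNumIn G C x k T (hTU.trans hUnion_C) hxT ?_
      intro u hu; exact hT u hu
    have := Finset.mem_sdiff.1 (hAnc hxAnc)
    exact this.2 hxC'
  refine ⟨?_, ?_, ⟨hAconn, hAmod⟩, hAncp⟩
  · intro x hx
    constructor
    · exact hforward x hx
    · intro hxA
      exact le_coreNumIn G (A ∪ Anc) x k A Finset.subset_union_left hxA hdeg
  · intro v hv
    have hsub : A.filter (fun w => G.Adj v w) ⊆
        (A.erase v).filter (fun w => G.Adj v w) := by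
      intro w hw
      rw [Finset.mem_filter] at hw ⊢
      exact ⟨Finset.mem_erase.2 ⟨(G.ne_of_adj hw.2).symm, hw.1⟩, hw.2⟩
    exact le_trans (hdeg v hv) (Finset.card_le_card hsub)
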